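/- Let c ∈ (0,1) and ℓ ≥ 1. There exists a constant y = y(c,ℓ) ∈ (c,1) such that the following holds for every protocol family {(g_n^[0], g_n^[1])}_{n} with sample size ℓ satisfying g_n^[0](0) = 0: for every sufficiently large n, every source opinion z ∈ {0,1}, every t, and every state x ≤ c·n, Pr(X_{t+1} ≤ y·n | X_t = x) ≥ 1 − exp(−2·n^{1/2}). -/

import Mathlib

open MeasureTheory ProbabilityTheory
open scoped ENNReal

/-- `P_b(p)`: probability that an agent with opinion `b` adopts opinion 1, when the current
proportion of 1-opinions is `p`; it is the expectation of `g(K)` for `K ~ Binomial(ℓ, p)`. -/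
noncomputable def sampleProb (ℓ : ℕ) (g : ℕ → ℝ) (p : ℝ) : ℝ :=
  ∑ k ∈ Finset.range (ℓ + 1), (ℓ.choose k : ℝ) * p ^ k * (1 - p) ^ (ℓ - k) * g k

/-- Probability that a `Binomial(m, q)` random variable equals `k`. -/
noncomputable def binomProb (m : ℕ) (q : ℝ) (k : ℕ) : ℝ :=
  (m.choose k : ℝ) * q ^ k * (1 - q) ^ (m - k)

/-- One-step transition probability of the configuration chain: conditionally on `X_t = x`,
`X_{t+1} = z + B₁ + B₀` with independent `B₁ ~ Binomial(x - z, P₁(x/n))` and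
`B₀ ~ Binomial(n - x - (1 - z), P₀(x/n))`. -/
noncomputable def transProb (n ℓ : ℕ) (g0 g1 : ℕ → ℝ) (z x y : ℕ) : ℝ :=
  ∑ j ∈ Finset.range (n + 1),
    if z + j ≤ y then
      binomProb (x - z) (sampleProb ℓ g1 ((x : ℝ) / n)) j *
        binomProb (n - x - (1 - z)) (sampleProb ℓ g0 ((x : ℝ) / n)) (y - z - j)
    else 0

/-- A protocol with sample size `ℓ` has update probabilities in `[0,1]`. -/
def ValidProtocol (ℓ : ℕ) (g0 g1 : ℕ → ℝ) : Prop :=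
  ∀ k ≤ ℓ, (0 ≤ g0 k ∧ g0 k ≤ 1) ∧ (0 ≤ g1 k ∧ g1 k ≤ 1)

/-- `(X_t)` is (a version of) the time-homogeneous configuration Markov chain of the
bit-dissemination protocol `(g0, g1)` with `n` agents, sample size `ℓ` and source opinion `z`:
conditionally on the whole past, the law of `X_{t+1}` is given by `transProb` applied to the
current state. -/
def IsBDChain (n ℓ : ℕ) (g0 g1 : ℕ → ℝ) (z : ℕ) {Ω : Type*} [MeasurableSpace Ω]
    (μ : Measure Ω) (X : ℕ → Ω → ℕ) : Prop :=
  (∀ t, Measurable (X t)) ∧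
    ∀ (t : ℕ) (x : ℕ → ℕ) (y : ℕ), μ {ω | ∀ s ≤ t, X s ω = x s} ≠ 0 →
      ProbabilityTheory.cond μ {ω | ∀ s ≤ t, X s ω = x s} {ω | X (t + 1) ω = y} =
        ENNReal.ofReal (transProb n ℓ g0 g1 z (x t) y)

/-- The convergence time `τ = inf {t : ∀ s ≥ t, X_s = n·z}`, with value `∞` if no such `t`
exists. -/
noncomputable def convTime (n z : ℕ) {Ω : Type*} (X : ℕ → Ω → ℕ) (ω : Ω) : ℝ≥0∞ :=
  sInf {r : ℝ≥0∞ | ∃ t : ℕ, r = t ∧ ∀ s, t ≤ s → X s ω = n * z}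

/-- The characteristic function `F_n(p) = -p + p·P₁(p) + (1-p)·P₀(p)`. -/
noncomputable def charF (ℓ : ℕ) (g0 g1 : ℕ → ℝ) (p : ℝ) : ℝ :=
  -p + p * sampleProb ℓ g1 p + (1 - p) * sampleProb ℓ g0 p


/-!
Conditionally on `X_t = x`, `X_{t+1} - z` is a sum of independent Bernoulli variables: at most `x`
of them, and at most `n - x` with parameter `P₀(x/n) ≤ 1 - (1 - x/n)^ℓ ≤ 1 - (1 - c)^ℓ` since
`g⁰(0) = 0`. So its mean is at most `(c + a) n + 1` with `a = (1 - c)(1 - (1 - c)^ℓ) < 1 - c`.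
Chernoff's bound with a fixed exponent `θ > 0`, applied to the generating function of `X_{t+1}`
(a product of binomial ones), gives `Pr(X_{t+1} > y n) ≤ e^{θ - κ n}` for `y = (1 + c + a) / 2`
and some `κ = κ(c, ℓ) > 0`, and `e^{θ - κ n} ≤ e^{-2 √n}` for large `n`. The law of `X_{t+1}`
given `X_t = x` alone comes from the one given the whole history by summing over the countably
many histories `Fin (t + 1) → ℕ`.
-/

open Finset Real

section SampleProb

variable {ℓ : ℕ} {p : ℝ}

lemma sampleProb_mono {g g' : ℕ → ℝ} (hp0 : 0 ≤ p) (hp1 : p ≤ 1) (h : ∀ k ≤ ℓ, g k ≤ g' k) :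
    sampleProb ℓ g p ≤ sampleProb ℓ g' p := by
  have : 0 ≤ 1 - p := by linarith
  refine sum_le_sum fun k hk => ?_
  gcongr
  exact h k (Nat.lt_succ_iff.mp (mem_range.mp hk))

lemma sampleProb_zero : sampleProb ℓ (fun _ => 0) p = 0 := by
  simp [sampleProb]

lemma sampleProb_one : sampleProb ℓ (fun _ => 1) p = 1 := by
  trans (p + (1 - p)) ^ ℓ
  · rw [add_pow]
    exact sum_congr rfl fun k _ => by ring
  · simp

lemma sampleProb_ite_zero_one :
    sampleProb ℓ (fun k => if k = 0 then 0 else 1) p = 1 - (1 - p) ^ ℓ := by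
  have h := sampleProb_one (ℓ := ℓ) (p := p)
  simp only [sampleProb, sum_range_succ'] at h ⊢
  simp at h ⊢
  linarith

lemma sampleProb_mem_Icc {g : ℕ → ℝ} (hp0 : 0 ≤ p) (hp1 : p ≤ 1)
    (hg : ∀ k ≤ ℓ, 0 ≤ g k ∧ g k ≤ 1) : sampleProb ℓ g p ∈ Set.Icc 0 1 :=
  ⟨sampleProb_zero ▸ sampleProb_mono hp0 hp1 fun k hk => (hg k hk).1,
    sampleProb_one ▸ sampleProb_mono hp0 hp1 fun k hk => (hg k hk).2⟩

lemma sampleProb_le_one_sub_pow {g : ℕ → ℝ} (hp0 : 0 ≤ p) (hp1 : p ≤ 1)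
    (hg : ∀ k ≤ ℓ, g k ≤ 1) (hg0 : g 0 = 0) : sampleProb ℓ g p ≤ 1 - (1 - p) ^ ℓ :=
  sampleProb_ite_zero_one ▸ sampleProb_mono hp0 hp1 fun k hk => by
    split_ifs with h
    · exact (congrArg g h).trans hg0 |>.le
    · exact hg k hk

lemma ValidProtocol.sampleProb_mem_Icc {g0 g1 : ℕ → ℝ} (hv : ValidProtocol ℓ g0 g1)
    (hp0 : 0 ≤ p) (hp1 : p ≤ 1) :
    sampleProb ℓ g0 p ∈ Set.Icc 0 1 ∧ sampleProb ℓ g1 p ∈ Set.Icc 0 1 :=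
  ⟨_root_.sampleProb_mem_Icc hp0 hp1 fun k hk => (hv k hk).1,
    _root_.sampleProb_mem_Icc hp0 hp1 fun k hk => (hv k hk).2⟩

end SampleProb

section GeneratingFunction

lemma binomProb_nonneg {m : ℕ} {q : ℝ} (hq0 : 0 ≤ q) (hq1 : q ≤ 1) (k : ℕ) :
    0 ≤ binomProb m q k := by
  have : 0 ≤ 1 - q := by linarith
  unfold binomProb
  positivity

lemma sum_range_binomProb_mul_pow_le {m : ℕ} {q r : ℝ} (hq0 : 0 ≤ q) (hq1 : q ≤ 1) (hr : 0 ≤ r)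
    (K : ℕ) : ∑ k ∈ range K, binomProb m q k * r ^ k ≤ (1 + q * (r - 1)) ^ m := by
  have hbinom : ∑ k ∈ range (m + 1), binomProb m q k * r ^ k = (1 + q * (r - 1)) ^ m := by
    rw [show 1 + q * (r - 1) = q * r + (1 - q) by ring, add_pow]
    exact sum_congr rfl fun k _ => by unfold binomProb; ring
  have hvanish : ∀ k ∉ range (m + 1), binomProb m q k * r ^ k = 0 := fun k hk => by
    simp [binomProb, Nat.choose_eq_zero_of_lt (by simpa using hk : m < k)]
  rw [← hbinom, sum_subset (range_subset_range.2 (le_max_right K (m + 1)))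
    fun k _ hk => hvanish k hk]
  exact sum_le_sum_of_subset_of_nonneg (range_subset_range.2 (le_max_left _ _))
    fun k _ _ => mul_nonneg (binomProb_nonneg hq0 hq1 k) (pow_nonneg hr k)

lemma sum_range_ite_le_eq_sum_range_sub {M : Type*} [AddCommMonoid M] (h : ℕ → M) (s N : ℕ) :
    ∑ y ∈ range N, (if s ≤ y then h (y - s) else 0) = ∑ k ∈ range (N - s), h k := by
  rw [← sum_filter, show (range N).filter (s ≤ ·) = Ico s N by ext; simp [and_comm],
    sum_Ico_eq_sum_range]
  simp

/-- The generating function of a convolution, shifted by `z`, is at most the product of those of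
its factors. -/
lemma sum_convolution_mul_pow_le {f h : ℕ → ℝ} (hf : ∀ j, 0 ≤ f j) {r H : ℝ} (hr : 0 ≤ r)
    (hH : ∀ K, ∑ k ∈ range K, h k * r ^ k ≤ H) (z J M : ℕ) :
    ∑ y ∈ range M, (∑ j ∈ range J, if z + j ≤ y then f j * h (y - z - j) else 0) * r ^ y ≤
      r ^ z * (∑ j ∈ range J, f j * r ^ j) * H := by
  have hshift : ∀ j, ∑ y ∈ range M, (if z + j ≤ y then f j * h (y - z - j) else 0) * r ^ y =
      r ^ z * (f j * r ^ j) * ∑ k ∈ range (M - (z + j)), h k * r ^ k := fun j => by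
    rw [mul_sum, ← sum_range_ite_le_eq_sum_range_sub]
    refine sum_congr rfl fun y _ => ?_
    split_ifs with hy
    · obtain ⟨k, rfl⟩ := Nat.exists_eq_add_of_le hy
      rw [Nat.sub_sub, Nat.add_sub_cancel_left, pow_add, pow_add]
      ring
    · simp
  calc _ = ∑ j ∈ range J, r ^ z * (f j * r ^ j) * ∑ k ∈ range (M - (z + j)), h k * r ^ k := by
        simp_rw [sum_mul]
        rw [sum_comm]
        exact sum_congr rfl fun j _ => hshift j
    _ ≤ ∑ j ∈ range J, r ^ z * (f j * r ^ j) * H :=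
        sum_le_sum fun j _ => mul_le_mul_of_nonneg_left (hH _) (by have := hf j; positivity)
    _ = _ := by rw [← sum_mul, ← mul_sum]

lemma transProb_nonneg {n ℓ : ℕ} {g0 g1 : ℕ → ℝ} {z x : ℕ}
    (h0 : sampleProb ℓ g0 (x / n) ∈ Set.Icc 0 1) (h1 : sampleProb ℓ g1 (x / n) ∈ Set.Icc 0 1)
    (y : ℕ) : 0 ≤ transProb n ℓ g0 g1 z x y :=
  sum_nonneg fun j _ => by
    split_ifs
    · exact mul_nonneg (binomProb_nonneg h1.1 h1.2 j) (binomProb_nonneg h0.1 h0.2 _)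
    · rfl

lemma ValidProtocol.transProb_nonneg {n ℓ : ℕ} {g0 g1 : ℕ → ℝ} {x : ℕ}
    (hv : ValidProtocol ℓ g0 g1) (hxn : x ≤ n) (z y : ℕ) : 0 ≤ transProb n ℓ g0 g1 z x y :=
  have h := hv.sampleProb_mem_Icc (p := x / n) (by positivity)
    (div_le_one_of_le₀ (by exact_mod_cast hxn) n.cast_nonneg)
  _root_.transProb_nonneg h.1 h.2 y

lemma sum_transProb_mul_pow_le {n ℓ : ℕ} {g0 g1 : ℕ → ℝ} {z x : ℕ}
    (h0 : sampleProb ℓ g0 (x / n) ∈ Set.Icc 0 1) (h1 : sampleProb ℓ g1 (x / n) ∈ Set.Icc 0 1)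
    {r : ℝ} (hr : 0 ≤ r) (M : ℕ) :
    ∑ y ∈ range M, transProb n ℓ g0 g1 z x y * r ^ y ≤
      r ^ z * (1 + sampleProb ℓ g1 (x / n) * (r - 1)) ^ (x - z) *
        (1 + sampleProb ℓ g0 (x / n) * (r - 1)) ^ (n - x - (1 - z)) := by
  have hq0 : 0 ≤ 1 + sampleProb ℓ g0 (x / n) * (r - 1) := by nlinarith [h0.1, h0.2]
  calc _ ≤ r ^ z *
          (∑ j ∈ range (n + 1), binomProb (x - z) (sampleProb ℓ g1 (x / n)) j * r ^ j) *
          (1 + sampleProb ℓ g0 (x / n) * (r - 1)) ^ (n - x - (1 - z)) :=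
        sum_convolution_mul_pow_le (binomProb_nonneg h1.1 h1.2) hr
          (sum_range_binomProb_mul_pow_le h0.1 h0.2 hr) z (n + 1) M
    _ ≤ _ := by
        gcongr
        exact sum_range_binomProb_mul_pow_le h1.1 h1.2 hr _

/-- Chernoff's bound: `1_{Y < y} ≤ e^{θ (y - Y)}`. -/
lemma sum_filter_lt_le_exp_mul_sum {f : ℕ → ℝ} (hf : ∀ y, 0 ≤ f y) {θ : ℝ} (hθ : 0 ≤ θ)
    (Y : ℝ) (M : ℕ) :
    ∑ y ∈ range M with Y < (y : ℕ), f y ≤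
      exp (-(θ * Y)) * ∑ y ∈ range M, f y * exp θ ^ y := by
  rw [mul_sum]
  refine (sum_le_sum fun y hy => ?_).trans (sum_le_sum_of_subset_of_nonneg (filter_subset _ _)
    fun y _ _ => by have := hf y; positivity)
  have hY : Y < y := (mem_filter.1 hy).2
  have hexp : 1 ≤ exp (-(θ * Y)) * exp θ ^ y := by
    rw [← exp_nat_mul, ← exp_add]
    exact one_le_exp (by nlinarith)
  nlinarith [hf y]

end GeneratingFunction

section UpperTail

variable {n ℓ : ℕ} {g0 g1 : ℕ → ℝ} {z x : ℕ} {c : ℝ}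

lemma sum_filter_lt_transProb_le (hc0 : 0 ≤ c) (hc1 : c ≤ 1) (hv : ValidProtocol ℓ g0 g1)
    (hg00 : g0 0 = 0) (hz : z ≤ 1) (hx : (x : ℝ) ≤ c * n) {θ : ℝ} (hθ : 0 ≤ θ) (Y : ℝ)
    (M : ℕ) :
    ∑ y ∈ range M with Y < (y : ℕ), transProb n ℓ g0 g1 z x y ≤
      exp (θ * (1 + x - Y) + (n - x) * log (1 + (1 - (1 - c) ^ ℓ) * (exp θ - 1))) := by
  have hxn : x ≤ n := by exact_mod_cast hx.trans (mul_le_of_le_one_left n.cast_nonneg hc1)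
  have hp0 : (0 : ℝ) ≤ x / n := by positivity
  have hpc : (x : ℝ) / n ≤ c := div_le_of_le_mul₀ n.cast_nonneg hc0 hx
  have hp1 : (x : ℝ) / n ≤ 1 := hpc.trans hc1
  obtain ⟨h0, h1⟩ := hv.sampleProb_mem_Icc hp0 hp1
  set q0 := sampleProb ℓ g0 (x / n)
  set q1 := sampleProb ℓ g1 (x / n)
  set qs := 1 - (1 - c) ^ ℓ
  have hu : 0 ≤ exp θ - 1 := by linarith [one_le_exp hθ]
  have hqs : 0 ≤ qs := sub_nonneg.2 (pow_le_one₀ (by linarith) (by linarith))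
  have hq0qs : q0 ≤ qs :=
    (sampleProb_le_one_sub_pow hp0 hp1 (fun k hk => (hv k hk).1.2) hg00).trans
      (by simp only [qs]; gcongr)
  have hb0 : 0 ≤ 1 + q0 * (exp θ - 1) := by nlinarith [h0.1]
  have hb1 : 0 ≤ 1 + q1 * (exp θ - 1) := by nlinarith [h1.1]
  have hpow_z : exp θ ^ z ≤ exp θ := by simpa using pow_le_pow_right₀ (one_le_exp hθ) hz
  have hpow_1 : (1 + q1 * (exp θ - 1)) ^ (x - z) ≤ exp (θ * x) := calc
    _ ≤ exp θ ^ (x - z) := by gcongr; nlinarith [h1.2]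
    _ ≤ exp θ ^ x := pow_le_pow_right₀ (one_le_exp hθ) (Nat.sub_le x z)
    _ = exp (θ * x) := by rw [← exp_nat_mul, mul_comm]
  have hpow_0 : (1 + q0 * (exp θ - 1)) ^ (n - x - (1 - z)) ≤
      exp ((n - x) * log (1 + qs * (exp θ - 1))) := calc
    _ ≤ (1 + qs * (exp θ - 1)) ^ (n - x - (1 - z)) := by gcongr
    _ ≤ (1 + qs * (exp θ - 1)) ^ (n - x) := pow_le_pow_right₀ (by nlinarith) (Nat.sub_le _ _)
    _ = exp ((n - x) * log (1 + qs * (exp θ - 1))) := by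
        rw [← Nat.cast_sub hxn, exp_nat_mul, exp_log (by nlinarith)]
  calc _ ≤ exp (-(θ * Y)) * ∑ y ∈ range M, transProb n ℓ g0 g1 z x y * exp θ ^ y :=
        sum_filter_lt_le_exp_mul_sum (transProb_nonneg h0 h1) hθ Y M
    _ ≤ exp (-(θ * Y)) * (exp θ ^ z * (1 + q1 * (exp θ - 1)) ^ (x - z) *
          (1 + q0 * (exp θ - 1)) ^ (n - x - (1 - z))) := by
        gcongr
        exact sum_transProb_mul_pow_le h0 h1 (exp_pos θ).le M
    _ ≤ exp (-(θ * Y)) * (exp θ * exp (θ * x) * exp ((n - x) * log (1 + qs * (exp θ - 1)))) := by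
        have := pow_nonneg hb0 (n - x - (1 - z))
        have := pow_nonneg hb1 (x - z)
        gcongr
    _ = _ := by rw [← exp_add, ← exp_add, ← exp_add]; ring_nf

end UpperTail

lemma exists_pos_mul_exp_sub_one_lt {a g : ℝ} (ha : 0 ≤ a) (hag : a < g) :
    ∃ θ > 0, a * (exp θ - 1) < g * θ := by
  -- `θ = log (1 + u)` with `1 + u = 2g / (g + a)`, so that `g (1 - e^{-θ}) = u (g + a) / 2`
  set u := (g - a) / (g + a)
  have hu : 0 < u := div_pos (by linarith) (by linarith)
  have hlog := one_sub_inv_le_log_of_pos (by linarith : 0 < 1 + u)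
  have hinv : g * (1 - (1 + u)⁻¹) = u * (g + a) / 2 := by
    have hg0 : g ≠ 0 := by linarith
    have hga0 : g + a ≠ 0 := by linarith
    have h1u : 1 + u = 2 * g / (g + a) := by
      simp only [u]
      field_simp
      ring
    rw [h1u, inv_div]
    simp only [u]
    field_simp
    ring
  refine ⟨log (1 + u), log_pos (by linarith), ?_⟩
  rw [exp_log (by linarith), add_sub_cancel_left]
  nlinarith [mul_le_mul_of_nonneg_left hlog (by linarith : 0 ≤ g)]

lemma eventually_sub_mul_le_neg_two_mul_sqrt {κ : ℝ} (hκ : 0 < κ) (L : ℝ) :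
    ∀ᶠ n : ℕ in Filter.atTop, L - κ * n ≤ -2 * √n := by
  refine (tendsto_natCast_atTop_atTop (R := ℝ)).eventually (p := fun t => L - κ * t ≤ -2 * √t) ?_
  filter_upwards [Filter.eventually_ge_atTop ((4 / κ) ^ 2), Filter.eventually_ge_atTop (2 * L / κ),
    Filter.eventually_ge_atTop 0] with t hsq hL ht
  have hs : 4 / κ ≤ √t := le_sqrt_of_sq_le hsq
  have h4 : 4 ≤ κ * √t := by rwa [div_le_iff₀' hκ] at hs
  have hL' : 2 * L ≤ κ * t := by rwa [div_le_iff₀' hκ] at hL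
  nlinarith [mul_self_sqrt ht, sqrt_nonneg t]

theorem exists_sum_filter_lt_transProb_le {c : ℝ} (hc0 : 0 ≤ c) (hc1 : c < 1) (ℓ : ℕ) :
    ∃ y, c < y ∧ y < 1 ∧ ∃ N : ℕ, ∀ n ≥ N, ∀ g0 g1 : ℕ → ℝ, ValidProtocol ℓ g0 g1 → g0 0 = 0 →
      ∀ z ≤ 1, ∀ x : ℕ, (x : ℝ) ≤ c * n → ∀ M : ℕ,
        ∑ y' ∈ range M with y * n < (y' : ℕ), transProb n ℓ g0 g1 z x y' ≤ exp (-2 * √n) := by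
  set qs := 1 - (1 - c) ^ ℓ
  have hqs0 : 0 ≤ qs := sub_nonneg.2 (pow_le_one₀ (by linarith) (by linarith))
  have hqs1 : qs < 1 := sub_lt_self 1 (pow_pos (by linarith) ℓ)
  set a := (1 - c) * qs
  have ha0 : 0 ≤ a := mul_nonneg (by linarith) hqs0
  have ha1 : a < 1 - c := by nlinarith
  set g := (1 - c + a) / 2 with hg
  obtain ⟨θ, hθ, hκ⟩ := exists_pos_mul_exp_sub_one_lt ha0 (by linarith [hg] : a < g)
  obtain ⟨N, hN⟩ := Filter.eventually_atTop.1
    (eventually_sub_mul_le_neg_two_mul_sqrt (sub_pos.2 hκ) θ)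
  refine ⟨c + g, by linarith [hg], by linarith [hg], N, fun n hn g0 g1 hv hg00 z hz x hx M => ?_⟩
  set lq := log (1 + qs * (exp θ - 1))
  have hu : 0 ≤ exp θ - 1 := by linarith [one_le_exp hθ.le]
  have hlqθ : lq ≤ θ := by
    rw [← log_exp θ]
    exact log_le_log (by nlinarith) (by nlinarith)
  have hlqa : (1 - c) * lq ≤ a * (exp θ - 1) := by
    have := log_le_sub_one_of_pos (by nlinarith : 0 < 1 + qs * (exp θ - 1))
    simp only [a]
    nlinarith
  have hxc : (x : ℝ) - c * n ≤ 0 := by linarith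
  calc _ ≤ exp (θ * (1 + x - (c + g) * n) + (n - x) * lq) :=
        sum_filter_lt_transProb_le hc0 hc1.le hv hg00 hz hx hθ.le _ M
    _ ≤ exp (θ - (g * θ - a * (exp θ - 1)) * n) := by
        gcongr
        nlinarith [mul_nonpos_of_nonneg_of_nonpos (sub_nonneg.2 hlqθ) hxc,
          mul_le_mul_of_nonneg_right hlqa (n.cast_nonneg : (0 : ℝ) ≤ n)]
    _ ≤ exp (-2 * √n) := exp_le_exp.2 (hN n hn)

section Chain

variable {n ℓ : ℕ} {g0 g1 : ℕ → ℝ} {z : ℕ} {Ω : Type*} [MeasurableSpace Ω] {μ : Measure Ω}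
  [IsFiniteMeasure μ] {X : ℕ → Ω → ℕ}

lemma measurableSet_cylinder (hX : ∀ t, Measurable (X t)) (t : ℕ) (w : ℕ → ℕ) :
    MeasurableSet {ω | ∀ s ≤ t, X s ω = w s} := by
  simp only [Set.ofPred_forall]
  exact .iInter fun s => .iInter fun _ => hX s (measurableSet_singleton _)

lemma IsBDChain.measure_cylinder_inter (hX : IsBDChain n ℓ g0 g1 z μ X) (t : ℕ) (w : ℕ → ℕ)
    (y : ℕ) :
    μ ({ω | ∀ s ≤ t, X s ω = w s} ∩ {ω | X (t + 1) ω = y}) =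
      ENNReal.ofReal (transProb n ℓ g0 g1 z (w t) y) * μ {ω | ∀ s ≤ t, X s ω = w s} := by
  by_cases h0 : μ {ω | ∀ s ≤ t, X s ω = w s} = 0
  · rw [h0, mul_zero]
    exact measure_mono_null Set.inter_subset_left h0
  · rw [← hX.2 t w y h0, cond_mul_eq_inter (measurableSet_cylinder hX.1 t w)]

lemma IsBDChain.measure_inter_eq (hX : IsBDChain n ℓ g0 g1 z μ X) (t x y : ℕ) :
    μ ({ω | X (t + 1) ω = y} ∩ {ω | X t ω = x}) =
      ENNReal.ofReal (transProb n ℓ g0 g1 z x y) * μ {ω | X t ω = x} := by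
  set traj : Ω → Fin (t + 1) → ℕ := fun ω i => X i ω
  have htraj : Measurable traj := measurable_pi_lambda _ fun i => hX.1 i
  have hdecomp : ∀ E, ∑' v, μ (traj ⁻¹' {v} ∩ E) = μ E := fun E => by
    rw [← tsum_univ]
    simpa [Measure.restrict_apply (htraj (measurableSet_singleton _))] using
      tsum_measure_preimage_singleton (μ := μ.restrict E) Set.countable_univ
        fun v _ => htraj (measurableSet_singleton v)
  rw [← hdecomp, ← hdecomp, ← ENNReal.tsum_mul_left]
  refine tsum_congr fun v => ?_
  set w : ℕ → ℕ := fun s => v ⟨min s t, Nat.lt_succ_of_le (min_le_right s t)⟩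
  have hcyl : traj ⁻¹' {v} = {ω | ∀ s ≤ t, X s ω = w s} := by
    ext ω
    simp only [Set.mem_preimage, Set.mem_singleton_iff, funext_iff, Set.mem_ofPred_eq, traj, w]
    refine ⟨fun h s hs => by simpa [min_eq_left hs] using h ⟨s, Nat.lt_succ_of_le hs⟩,
      fun h i => ?_⟩
    have hi : (i : ℕ) ≤ t := Nat.le_of_lt_succ i.isLt
    simpa [min_eq_left hi] using h i hi
  by_cases hv : w t = x
  · have hsub : traj ⁻¹' {v} ⊆ {ω | X t ω = x} := fun ω hω => by
      rw [hcyl] at hω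
      exact (hω t le_rfl).trans hv
    rw [Set.inter_left_comm, Set.inter_eq_left.2 hsub, Set.inter_comm,
      hcyl, ← hv, hX.measure_cylinder_inter]
  · have hempty : traj ⁻¹' {v} ∩ {ω | X t ω = x} = ∅ := by
      rw [hcyl]
      exact Set.eq_empty_of_forall_notMem fun ω hω => hv ((hω.1 t le_rfl).symm.trans hω.2)
    rw [Set.inter_left_comm, hempty]
    simp

lemma IsBDChain.cond_preimage (hX : IsBDChain n ℓ g0 g1 z μ X) {t x : ℕ}
    (hA : μ {ω | X t ω = x} ≠ 0) (S : Set ℕ) :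
    μ[X (t + 1) ⁻¹' S | {ω | X t ω = x}] =
      ∑' y : S, ENNReal.ofReal (transProb n ℓ g0 g1 z x y) := by
  have hA_meas : MeasurableSet {ω | X t ω = x} := hX.1 t (measurableSet_singleton x)
  rw [cond_apply hA_meas, Set.inter_comm,
    ← Measure.restrict_apply (hX.1 _ S.to_countable.measurableSet),
    ← tsum_measure_preimage_singleton S.to_countable fun y _ => hX.1 _ (measurableSet_singleton y)]
  simp_rw [Measure.restrict_apply (hX.1 _ (measurableSet_singleton _))]
  simp only [Set.preimage, Set.mem_singleton_iff, hX.measure_inter_eq]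
  rw [ENNReal.tsum_mul_right, mul_comm, mul_assoc, ENNReal.mul_inv_cancel hA (measure_ne_top _ _),
    mul_one]

end Chain

theorem stmt_4_general (c : ℝ) (hc0 : 0 < c) (hc1 : c < 1) (ℓ : ℕ) :
    ∃ y : ℝ, c < y ∧ y < 1 ∧
      ∀ g0 g1 : ℕ → ℕ → ℝ, (∀ n : ℕ, ValidProtocol ℓ (g0 n) (g1 n)) →
        (∀ n : ℕ, g0 n 0 = 0) →
        ∃ N : ℕ, ∀ n : ℕ, N ≤ n → ∀ z : ℕ, z ≤ 1 →
          ∀ (Ω : Type) [MeasurableSpace Ω] (μ : Measure Ω) [IsProbabilityMeasure μ]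
            (X : ℕ → Ω → ℕ), IsBDChain n ℓ (g0 n) (g1 n) z μ X →
              ∀ (t : ℕ) (x : ℕ), (x : ℝ) ≤ c * n → μ {ω | X t ω = x} ≠ 0 →
                1 - ENNReal.ofReal (Real.exp (-2 * (n : ℝ) ^ ((1 : ℝ) / 2))) ≤
                  ProbabilityTheory.cond μ {ω | X t ω = x}
                    {ω | (X (t + 1) ω : ℝ) ≤ y * n} := by
  obtain ⟨y, hyc, hy1, N, hN⟩ := exists_sum_filter_lt_transProb_le hc0.le hc1 ℓ
  refine ⟨y, hyc, hy1, fun g0 g1 hv hg00 => ⟨N, fun n hn z hz Ω _ μ _ X hX t x hx hA => ?_⟩⟩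
  have := cond_isProbabilityMeasure hA
  have hxn : x ≤ n := by exact_mod_cast hx.trans (mul_le_of_le_one_left n.cast_nonneg hc1.le)
  set P := fun y => ENNReal.ofReal (transProb n ℓ (g0 n) (g1 n) z x y)
  have hB : {ω | (X (t + 1) ω : ℝ) ≤ y * n} = (X (t + 1) ⁻¹' {k | y * n < k})ᶜ := by
    ext
    simp
  rw [hB, prob_compl_eq_one_sub (hX.1 _ (Set.to_countable _).measurableSet), hX.cond_preimage hA,
    _root_.tsum_subtype _ P, ← sqrt_eq_rpow]
  refine tsub_le_tsub_left (ENNReal.tsum_le_of_sum_range_le fun M => ?_) 1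
  rw [sum_indicator_eq_sum_filter,
    ← ENNReal.ofReal_sum_of_nonneg fun y _ => (hv n).transProb_nonneg hxn z y]
  exact ENNReal.ofReal_le_ofReal (hN n hn (g0 n) (g1 n) (hv n) (hg00 n) z hz x hx M)

/-- for `c ∈ (0,1)` and `ℓ ≥ 1` there is a constant `y = y(c,ℓ) ∈ (c,1)` such
that for every protocol family with sample size `ℓ` satisfying `g_n⁰(0) = 0`, for every
sufficiently large `n`, every source opinion `z ∈ {0,1}`, every `t` and every state
`x ≤ c·n`, `Pr(X_{t+1} ≤ y·n | X_t = x) ≥ 1 - exp(-2·n^{1/2})`. -/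
theorem stmt_4 (c : ℝ) (hc0 : 0 < c) (hc1 : c < 1) (ℓ : ℕ) (hℓ : 1 ≤ ℓ) :
    ∃ y : ℝ, c < y ∧ y < 1 ∧
      ∀ g0 g1 : ℕ → ℕ → ℝ, (∀ n : ℕ, ValidProtocol ℓ (g0 n) (g1 n)) →
        (∀ n : ℕ, g0 n 0 = 0) →
        ∃ N : ℕ, ∀ n : ℕ, N ≤ n → ∀ z : ℕ, z ≤ 1 →
          ∀ (Ω : Type) [MeasurableSpace Ω] (μ : Measure Ω) [IsProbabilityMeasure μ]
            (X : ℕ → Ω → ℕ), IsBDChain n ℓ (g0 n) (g1 n) z μ X →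
              ∀ (t : ℕ) (x : ℕ), (x : ℝ) ≤ c * n → μ {ω | X t ω = x} ≠ 0 →
                1 - ENNReal.ofReal (Real.exp (-2 * (n : ℝ) ^ ((1 : ℝ) / 2))) ≤
                  ProbabilityTheory.cond μ {ω | X t ω = x}
                    {ω | (X (t + 1) ω : ℝ) ≤ y * n} :=
  stmt_4_general c hc0 hc1 ℓ
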